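/- Sub- and super-multiplicative bounds for the linear Rényi spread under tensor products: let p be a probability vector on Fin m and q a probability vector on Fin n, and let r : Fin m × Fin n → ℝ be their tensor product, r (i, j) = p i * q j (a probability vector on Fin m × Fin n). Then F p * F q ≤ F r ≤ F p + F q. -/
import Mathlib


/-- The linear Rényi spread of a probability vector on a finite index type. -/
noncomputable def F {ι : Type*} [Fintype ι] (p : ι → ℝ) : ℝ :=
  (∑ i, (p i) ^ 3) - (∑ i, (p i) ^ 2) ^ 2

lemma aux_sq_le {k : ℕ} (p : Fin k → ℝ) (hp0 : ∀ i, 0 ≤ p i) (hp1 : ∑ i, p i = 1) :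
    (∑ i, (p i) ^ 2) ^ 2 ≤ ∑ i, (p i) ^ 3 := by
  have := Finset.sum_sq_le_sum_mul_sum_of_sq_eq_mul (Finset.univ : Finset (Fin k))
    (r := fun i => p i ^ 2) (f := p) (g := fun i => p i ^ 3)
    (fun i _ => hp0 i) (fun i _ => pow_nonneg (hp0 i) 3) (fun i _ => by ring)
  simpa [hp1] using this

lemma aux_cube_le_one {k : ℕ} (p : Fin k → ℝ) (hp0 : ∀ i, 0 ≤ p i) (hp1 : ∑ i, p i = 1) :
    ∑ i, (p i) ^ 3 ≤ 1 := by
  calc ∑ i, (p i) ^ 3 ≤ ∑ i, p i := by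
        refine Finset.sum_le_sum fun i _ => ?_
        have h1 : p i ≤ 1 := hp1 ▸ Finset.single_le_sum (fun j _ => hp0 j) (Finset.mem_univ i)
        calc (p i) ^ 3 ≤ (p i) ^ 1 := pow_le_pow_of_le_one (hp0 i) h1 (by norm_num)
          _ = p i := pow_one _
    _ = 1 := hp1

/-- Sub- and super-multiplicative bounds for the linear Rényi spread under
tensor products. -/
theorem linear_renyi_spread_tensor_bounds {m n : ℕ}
    (p : Fin m → ℝ) (q : Fin n → ℝ)
    (hp0 : ∀ i, 0 ≤ p i) (hp1 : ∑ i, p i = 1)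
    (hq0 : ∀ j, 0 ≤ q j) (hq1 : ∑ j, q j = 1) :
    F p * F q ≤ F (fun ij : Fin m × Fin n => p ij.1 * q ij.2) ∧
      F (fun ij : Fin m × Fin n => p ij.1 * q ij.2) ≤ F p + F q := by
  have h2 : (∑ ij : Fin m × Fin n, (p ij.1 * q ij.2) ^ 2)
      = (∑ i, (p i) ^ 2) * (∑ j, (q j) ^ 2) := by
    rw [Fintype.sum_prod_type, Finset.sum_mul_sum]
    simp [mul_pow]
  have h3 : (∑ ij : Fin m × Fin n, (p ij.1 * q ij.2) ^ 3)
      = (∑ i, (p i) ^ 3) * (∑ j, (q j) ^ 3) := by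
    rw [Fintype.sum_prod_type, Finset.sum_mul_sum]
    simp [mul_pow]
  have hA : (∑ i, (p i) ^ 2) ^ 2 ≤ ∑ i, (p i) ^ 3 := aux_sq_le p hp0 hp1
  have hC : (∑ j, (q j) ^ 2) ^ 2 ≤ ∑ j, (q j) ^ 3 := aux_sq_le q hq0 hq1
  have hB1 : ∑ i, (p i) ^ 3 ≤ 1 := aux_cube_le_one p hp0 hp1
  have hD1 : ∑ j, (q j) ^ 3 ≤ 1 := aux_cube_le_one q hq0 hq1
  have hA0 : 0 ≤ ∑ i, (p i) ^ 2 := Finset.sum_nonneg fun i _ => sq_nonneg _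
  have hC0 : 0 ≤ ∑ j, (q j) ^ 2 := Finset.sum_nonneg fun j _ => sq_nonneg _
  unfold F
  rw [h2, h3]
  constructor
  · nlinarith [mul_nonneg (sq_nonneg (∑ i, (p i) ^ 2))
      (sub_nonneg.mpr hC), mul_nonneg (sq_nonneg (∑ j, (q j) ^ 2)) (sub_nonneg.mpr hA)]
  · nlinarith [mul_nonneg (sub_nonneg.mpr hD1) (sub_nonneg.mpr hA),
      mul_nonneg (sub_nonneg.mpr hB1) (sub_nonneg.mpr hC),
      sq_nonneg (∑ i, (p i) ^ 2), sq_nonneg (∑ j, (q j) ^ 2)]
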